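/- Let R be a ring and M a finitely presented right R-module. Then the functor M ⊗_R − , regarded as an object of the category of additive functors from finitely presented left R-modules to abelian groups, is a finitely presentable object: the hom-functor out of it preserves directed colimits. -/

import Mathlib

open CategoryTheory Limits Opposite

universe u

namespace PureGen

section BalancedTensor

variable (R : Type u) [Ring R]
variable (M : Type u) [AddCommGroup M] [Module Rᵐᵒᵖ M]
variable (N : Type u) [AddCommGroup N] [Module R N]

/-- The subgroup of relations defining the balanced tensor product `M ⊗_R N` of a right
`R`-module `M` (i.e. a left `Rᵐᵒᵖ`-module) and a left `R`-module `N`. -/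
def tensorRelations : AddSubgroup (FreeAbelianGroup (M × N)) :=
  AddSubgroup.closure
    ({x | ∃ (k k' : M) (n : N), x = FreeAbelianGroup.of (k + k', n)
        - FreeAbelianGroup.of (k, n) - FreeAbelianGroup.of (k', n)} ∪
     {x | ∃ (k : M) (n n' : N), x = FreeAbelianGroup.of (k, n + n')
        - FreeAbelianGroup.of (k, n) - FreeAbelianGroup.of (k, n')} ∪
     {x | ∃ (k : M) (r : R) (n : N), x = FreeAbelianGroup.of (MulOpposite.op r • k, n)
        - FreeAbelianGroup.of (k, r • n)})

/-- The balanced tensor product `M ⊗_R N` of a right `R`-module and a left `R`-module,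
as an abelian group. -/
abbrev BalancedTensor : Type u :=
  FreeAbelianGroup (M × N) ⧸ tensorRelations R M N

/-- The canonical generator `m ⊗ n` of the balanced tensor product. -/
def BalancedTensor.mk (m : M) (n : N) : BalancedTensor R M N :=
  QuotientAddGroup.mk' _ (FreeAbelianGroup.of (m, n))

variable {N}
variable {N' : Type u} [AddCommGroup N'] [Module R N']

/-- The map `id_M ⊗ f : M ⊗_R N ⟶ M ⊗_R N'` induced by a left `R`-module map
`f : N → N'`. -/
def tensorMapR (f : N →ₗ[R] N') :
    BalancedTensor R M N →+ BalancedTensor R M N' :=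
  QuotientAddGroup.map _ _ (FreeAbelianGroup.map (Prod.map id f)) (by
    rw [← AddSubgroup.map_le_iff_le_comap, tensorRelations, AddMonoidHom.map_closure]
    apply AddSubgroup.closure_mono
    rintro x ⟨y, hy, rfl⟩
    rcases hy with (⟨k, k', n, rfl⟩ | ⟨k, n, n', rfl⟩) | ⟨k, r, n, rfl⟩
    · exact Or.inl (Or.inl ⟨k, k', f n, by
        simp [FreeAbelianGroup.map_of_apply, map_sub, Prod.map]⟩)
    · exact Or.inl (Or.inr ⟨k, f n, f n', by
        simp [FreeAbelianGroup.map_of_apply, map_sub, Prod.map, map_add]⟩)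
    · exact Or.inr ⟨k, r, f n, by
        simp [FreeAbelianGroup.map_of_apply, map_sub, Prod.map, map_smul]⟩)

@[simp]
lemma tensorMapR_mk (f : N →ₗ[R] N') (m : M) (n : N) :
    tensorMapR R M f (BalancedTensor.mk R M N m n) = BalancedTensor.mk R M N' m (f n) := by
  rw [tensorMapR, BalancedTensor.mk, BalancedTensor.mk, QuotientAddGroup.map_mk',
    FreeAbelianGroup.map_of_apply]
  rfl

/-- Two homomorphisms out of a balanced tensor product agreeing on the generators
are equal. -/
lemma BalancedTensor.hom_ext {A : Type u} [AddCommGroup A]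
    (φ ψ : BalancedTensor R M N →+ A)
    (H : ∀ (m : M) (n : N), φ (BalancedTensor.mk R M N m n) = ψ (BalancedTensor.mk R M N m n)) :
    φ = ψ :=
  QuotientAddGroup.addMonoidHom_ext _
    (FreeAbelianGroup.lift_ext _ _ (fun x => H x.1 x.2))

lemma BalancedTensor.mk_add_right (m : M) (a b : N) :
    BalancedTensor.mk R M N m (a + b) =
      BalancedTensor.mk R M N m a + BalancedTensor.mk R M N m b := by
  have h1 : QuotientAddGroup.mk' (tensorRelations R M N) (FreeAbelianGroup.of (m, a + b)) =
      QuotientAddGroup.mk' (tensorRelations R M N)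
        (FreeAbelianGroup.of (m, a) + FreeAbelianGroup.of (m, b)) := by
    rw [QuotientAddGroup.mk'_eq_mk']
    refine ⟨-(FreeAbelianGroup.of (m, a + b) - FreeAbelianGroup.of (m, a)
      - FreeAbelianGroup.of (m, b)), ?_, by abel⟩
    exact neg_mem (AddSubgroup.subset_closure (Or.inl (Or.inr ⟨m, a, b, rfl⟩)))
  rw [BalancedTensor.mk, BalancedTensor.mk, BalancedTensor.mk, h1, map_add]

end BalancedTensor

section FunctorCategory

variable (R : Type u) [Ring R]

/-- The category of finitely presented left `R`-modules. -/
def FPModLeft : Type (u + 1) :=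
  ObjectProperty.FullSubcategory (fun N : ModuleCat.{u} R => Module.FinitePresentation R N)

instance : Category (FPModLeft R) :=
  ObjectProperty.FullSubcategory.category _

instance : Preadditive (FPModLeft R) :=
  Preadditive.fullSubcategory _

variable (M : Type u) [AddCommGroup M] [Module Rᵐᵒᵖ M]

/-- The functor `M ⊗_R −` from finitely presented left `R`-modules to abelian groups. -/
def tensorFunctor : FPModLeft R ⥤ AddCommGrpCat.{u} where
  obj N := AddCommGrpCat.of (BalancedTensor R M N.obj)
  map {N N'} f := AddCommGrpCat.ofHom (tensorMapR R M (f.hom.hom : N.obj →ₗ[R] N'.obj))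
  map_id N := AddCommGrpCat.hom_ext
    (BalancedTensor.hom_ext R M _ _ (fun m n => by
      simp only [AddCommGrpCat.hom_ofHom, tensorMapR_mk]; rfl))
  map_comp {N N' N''} f g := AddCommGrpCat.hom_ext (BalancedTensor.hom_ext R M _ _ (fun m n => by
    show tensorMapR R M (show N.obj →ₗ[R] N''.obj from (f ≫ g).hom.hom)
        (BalancedTensor.mk R M _ m n) =
      tensorMapR R M (show N'.obj →ₗ[R] N''.obj from g.hom.hom)
        (tensorMapR R M (show N.obj →ₗ[R] N'.obj from f.hom.hom) (BalancedTensor.mk R M _ m n))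
    rw [tensorMapR_mk, tensorMapR_mk, tensorMapR_mk]
    rfl))

instance tensorFunctor_additive : (tensorFunctor R M).Additive where
  map_add {N N'} {f g} := AddCommGrpCat.hom_ext (BalancedTensor.hom_ext R M _ _ (fun m n => by
    show tensorMapR R M (show N.obj →ₗ[R] N'.obj from (f + g).hom.hom)
        (BalancedTensor.mk R M _ m n) =
      tensorMapR R M (show N.obj →ₗ[R] N'.obj from f.hom.hom) (BalancedTensor.mk R M _ m n) +
        tensorMapR R M (show N.obj →ₗ[R] N'.obj from g.hom.hom) (BalancedTensor.mk R M _ m n)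
    rw [tensorMapR_mk, tensorMapR_mk, tensorMapR_mk]
    show _ = _ + _
    exact BalancedTensor.mk_add_right R M m (f.hom.hom n) (g.hom.hom n)))

/-- The category of additive functors from finitely presented left `R`-modules to
abelian groups. -/
def AddFunctorCat : Type (u + 1) :=
  ObjectProperty.FullSubcategory (fun F : FPModLeft R ⥤ AddCommGrpCat.{u} => F.Additive)

instance : Category (AddFunctorCat R) :=
  ObjectProperty.FullSubcategory.category _

/-- `M ⊗_R −` as an object of the category of additive functors. -/
def tensorFunctorObj : AddFunctorCat R :=
  ⟨tensorFunctor R M, tensorFunctor_additive R M⟩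

end FunctorCategory

end PureGen

namespace PureGen

universe w v u'

/-- An object is finitely presentable if its hom-functor preserves directed colimits
(colimits indexed by nonempty directed posets). -/
def IsFinitelyPresentableObj {C : Type u'} [Category.{v} C] (X : C) : Prop :=
  ∀ (J : Type w) (_ : Preorder J) (_ : IsDirected J (· ≤ ·)) (_ : Nonempty J),
    PreservesColimitsOfShape J (coyoneda.obj (op X))

end PureGen

namespace PureGen

section TensorExtras

variable (R : Type u) [Ring R]
variable (M : Type u) [AddCommGroup M] [Module Rᵐᵒᵖ M]
variable (N : Type u) [AddCommGroup N] [Module R N]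

lemma BalancedTensor.mk_add_left (a b : M) (n : N) :
    BalancedTensor.mk R M N (a + b) n =
      BalancedTensor.mk R M N a n + BalancedTensor.mk R M N b n := by
  have h1 : QuotientAddGroup.mk' (tensorRelations R M N) (FreeAbelianGroup.of (a + b, n)) =
      QuotientAddGroup.mk' (tensorRelations R M N)
        (FreeAbelianGroup.of (a, n) + FreeAbelianGroup.of (b, n)) := by
    rw [QuotientAddGroup.mk'_eq_mk']
    refine ⟨-(FreeAbelianGroup.of (a + b, n) - FreeAbelianGroup.of (a, n)
      - FreeAbelianGroup.of (b, n)), ?_, by abel⟩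
    exact neg_mem (AddSubgroup.subset_closure (Or.inl (Or.inl ⟨a, b, n, rfl⟩)))
  rw [BalancedTensor.mk, BalancedTensor.mk, BalancedTensor.mk, h1, map_add]

lemma BalancedTensor.mk_smul (m : M) (r : R) (n : N) :
    BalancedTensor.mk R M N (MulOpposite.op r • m) n = BalancedTensor.mk R M N m (r • n) := by
  have h1 : QuotientAddGroup.mk' (tensorRelations R M N)
        (FreeAbelianGroup.of (MulOpposite.op r • m, n)) =
      QuotientAddGroup.mk' (tensorRelations R M N) (FreeAbelianGroup.of (m, r • n)) := by
    rw [QuotientAddGroup.mk'_eq_mk']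
    refine ⟨-(FreeAbelianGroup.of (MulOpposite.op r • m, n)
      - FreeAbelianGroup.of (m, r • n)), ?_, by abel⟩
    exact neg_mem (AddSubgroup.subset_closure (Or.inr ⟨m, r, n, rfl⟩))
  rw [BalancedTensor.mk, BalancedTensor.mk, h1]

/-- Lift a balanced biadditive map to a homomorphism out of the balanced tensor product. -/
def BalancedTensor.lift {A : Type u} [AddCommGroup A] (f : M → N → A)
    (h1 : ∀ m m' n, f (m + m') n = f m n + f m' n)
    (h2 : ∀ m n n', f m (n + n') = f m n + f m n')
    (h3 : ∀ (m : M) (r : R) (n : N), f (MulOpposite.op r • m) n = f m (r • n)) :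
    BalancedTensor R M N →+ A :=
  QuotientAddGroup.lift _ (FreeAbelianGroup.lift (fun p => f p.1 p.2)) (by
    intro x hx
    induction hx using AddSubgroup.closure_induction with
    | mem x h =>
      rcases h with (⟨k, k', n, rfl⟩ | ⟨k, n, n', rfl⟩) | ⟨k, r, n, rfl⟩ <;>
        simp [AddMonoidHom.mem_ker, map_sub, FreeAbelianGroup.lift_apply_of, h1, h2, h3]
    | zero => exact zero_mem _
    | add a b _ _ ha hb => exact add_mem ha hb
    | neg a _ ha => exact neg_mem ha)

@[simp]
lemma BalancedTensor.lift_mk {A : Type u} [AddCommGroup A] (f : M → N → A)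
    (h1 : ∀ m m' n, f (m + m') n = f m n + f m' n)
    (h2 : ∀ m n n', f m (n + n') = f m n + f m n')
    (h3 : ∀ (m : M) (r : R) (n : N), f (MulOpposite.op r • m) n = f m (r • n)) (m : M) (n : N) :
    BalancedTensor.lift R M N f h1 h2 h3 (BalancedTensor.mk R M N m n) = f m n := by
  rw [BalancedTensor.lift, BalancedTensor.mk, QuotientAddGroup.mk'_apply,
    QuotientAddGroup.lift_mk, FreeAbelianGroup.lift_apply_of]

end TensorExtras

end PureGen
namespace PureGen

section EvalR

variable (R : Type u) [Ring R]

/-- `R` as a finitely presented left `R`-module. -/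
def RObj : FPModLeft R := ⟨ModuleCat.of R R, (inferInstance : Module.FinitePresentation R R)⟩

/-- Right multiplication by `r` as an endomorphism of `R` in `FPModLeft R`. -/
def rmul (r : R) : RObj R ⟶ RObj R :=
  ObjectProperty.homMk (ModuleCat.ofHom (LinearMap.toSpanSingleton R R r))

lemma fpHom_ext {N N' : FPModLeft R} {f g : N ⟶ N'} (h : ∀ x : N.obj, f.hom.hom x = g.hom.hom x) :
    f = g := by
  apply ObjectProperty.hom_ext
  apply ModuleCat.hom_ext
  apply LinearMap.ext
  exact h

lemma rmul_one : rmul R 1 = 𝟙 (RObj R) :=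
  fpHom_ext _ fun (x : R) => mul_one x

lemma rmul_comp (r s : R) : rmul R r ≫ rmul R s = rmul R (r * s) :=
  fpHom_ext _ fun (x : R) => mul_assoc x r s

lemma rmul_add (r s : R) : rmul R (r + s) = rmul R r + rmul R s :=
  fpHom_ext _ fun (x : R) => mul_add x r s

lemma rmul_zero : rmul R (0 : R) = 0 :=
  fpHom_ext _ fun (x : R) => mul_zero x

variable {R}
variable (F G H : FPModLeft R ⥤ AddCommGrpCat.{u})

/-- The right `R`-module structure on `F(R)` for an additive functor `F`. -/
instance instModuleEvalR [F.Additive] : Module Rᵐᵒᵖ (F.obj (RObj R)) where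
  smul r x := F.map (rmul R r.unop) x
  one_smul x := by
    show F.map (rmul R (1 : Rᵐᵒᵖ).unop) x = x
    rw [MulOpposite.unop_one, rmul_one, F.map_id]; rfl
  mul_smul r s x := by
    show F.map (rmul R (r * s).unop) x = F.map (rmul R r.unop) (F.map (rmul R s.unop) x)
    rw [MulOpposite.unop_mul, ← rmul_comp, F.map_comp]; rfl
  smul_zero r := map_zero _
  smul_add r x y := map_add _ x y
  add_smul r s x := by
    show F.map (rmul R (r + s).unop) x = F.map (rmul R r.unop) x + F.map (rmul R s.unop) x
    rw [MulOpposite.unop_add, rmul_add, F.map_add]; rfl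
  zero_smul x := by
    show F.map (rmul R (0 : Rᵐᵒᵖ).unop) x = 0
    rw [MulOpposite.unop_zero, rmul_zero, F.map_zero]; rfl

lemma evalR_smul_def [F.Additive] (r : Rᵐᵒᵖ) (x : F.obj (RObj R)) :
    r • x = F.map (rmul R r.unop) x := rfl

variable {F G H}

/-- The `Rᵐᵒᵖ`-linear map `F(R) → G(R)` induced by a natural transformation. -/
def evalRMap [F.Additive] [G.Additive] (α : F ⟶ G) :
    F.obj (RObj R) →ₗ[Rᵐᵒᵖ] G.obj (RObj R) where
  toFun x := α.app (RObj R) x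
  map_add' x y := map_add _ x y
  map_smul' r x := by
    show α.app (RObj R) (F.map (rmul R r.unop) x) = G.map (rmul R r.unop) (α.app (RObj R) x)
    have h := α.naturality (rmul R r.unop)
    exact (ConcreteCategory.congr_hom h x :)

@[simp] lemma evalRMap_apply [F.Additive] [G.Additive] (α : F ⟶ G) (x : F.obj (RObj R)) :
    evalRMap α x = α.app (RObj R) x := rfl

lemma evalRMap_comp [F.Additive] [G.Additive] [H.Additive] (α : F ⟶ G) (β : G ⟶ H) :
    evalRMap (α ≫ β) = (evalRMap β).comp (evalRMap α) := rfl

end EvalR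

section Correspondence

variable {R : Type u} [Ring R]
variable (M : Type u) [AddCommGroup M] [Module Rᵐᵒᵖ M]
variable (F G : FPModLeft R ⥤ AddCommGrpCat.{u})

/-- The element `n : N` as a morphism `R ⟶ N` in `FPModLeft R`. -/
def elemHom (N : FPModLeft R) (n : N.obj) : RObj R ⟶ N :=
  ObjectProperty.homMk (ModuleCat.ofHom (LinearMap.toSpanSingleton R N.obj n))

lemma rmul_comp_elemHom (N : FPModLeft R) (r : R) (n : N.obj) :
    rmul R r ≫ elemHom N n = elemHom N (r • n) :=
  fpHom_ext _ fun (x : R) => mul_smul x r n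

lemma elemHom_comp {N N' : FPModLeft R} (f : N ⟶ N') (n : N.obj) :
    elemHom N n ≫ f = elemHom N' (f.hom.hom n) :=
  fpHom_ext _ fun (x : R) => map_smul f.hom.hom x n

lemma elemHom_add (N : FPModLeft R) (n n' : N.obj) :
    elemHom N (n + n') = elemHom N n + elemHom N n' :=
  fpHom_ext _ fun (x : R) => smul_add x n n'

lemma elemHom_one : elemHom (RObj R) (1 : R) = 𝟙 (RObj R) :=
  fpHom_ext _ fun (x : R) => mul_one x

variable {M F G}

lemma tensorFunctor_map_mk {N N' : FPModLeft R} (f : N ⟶ N') (m : M) (n : N.obj) :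
    (tensorFunctor R M).map f (BalancedTensor.mk R M N.obj m n) =
      BalancedTensor.mk R M N'.obj m (f.hom.hom n) :=
  tensorMapR_mk R M f.hom.hom m n

/-- From a natural transformation `M ⊗ − ⟶ F` to an `Rᵐᵒᵖ`-linear map `M → F(R)`. -/
def toHom [F.Additive] (η : tensorFunctor R M ⟶ F) : M →ₗ[Rᵐᵒᵖ] F.obj (RObj R) where
  toFun m := η.app (RObj R) (BalancedTensor.mk R M ((RObj R).obj) m (1 : R))
  map_add' a b := by
    show η.app (RObj R) (BalancedTensor.mk R M ((RObj R).obj) (a + b) (1 : R)) =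
      η.app (RObj R) (BalancedTensor.mk R M ((RObj R).obj) a (1 : R)) +
        η.app (RObj R) (BalancedTensor.mk R M ((RObj R).obj) b (1 : R))
    erw [BalancedTensor.mk_add_left, map_add]
  map_smul' r m := by
    show η.app (RObj R) (BalancedTensor.mk R M _ (r • m) (1 : R)) =
      F.map (rmul R r.unop) (η.app (RObj R) (BalancedTensor.mk R M _ m (1 : R)))
    have h := ConcreteCategory.congr_hom (η.naturality (rmul R r.unop))
      (BalancedTensor.mk R M ((RObj R).obj) m (1 : R))
    have h2 : (tensorFunctor R M).map (rmul R r.unop)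
        (BalancedTensor.mk R M ((RObj R).obj) m (1 : R)) =
        BalancedTensor.mk R M ((RObj R).obj) m (r.unop : R) := by
      erw [tensorFunctor_map_mk]
      congr 1
      show (1 : R) • (r.unop : R) = (r.unop : R)
      rw [smul_eq_mul, one_mul]
    have h3 : BalancedTensor.mk R M ((RObj R).obj) (r • m) (1 : R) =
        BalancedTensor.mk R M ((RObj R).obj) m (r.unop : R) := by
      have h4 := BalancedTensor.mk_smul R M ((RObj R).obj) m r.unop (1 : R)
      rw [MulOpposite.op_unop] at h4
      rw [h4]
      congr 1
      show (r.unop : R) • (1 : R) = (r.unop : R)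
      rw [smul_eq_mul, mul_one]
    rw [h3, ← h2]
    exact h

/-- The component of `ofHom ψ` at `N`. -/
def ofHomApp [F.Additive] (ψ : M →ₗ[Rᵐᵒᵖ] F.obj (RObj R)) (N : FPModLeft R) :
    (tensorFunctor R M).obj N ⟶ F.obj N :=
  AddCommGrpCat.ofHom <| BalancedTensor.lift R M N.obj
    (fun m n => F.map (elemHom N n) (ψ m))
    (fun m m' n => by
      show F.map (elemHom N n) (ψ (m + m')) =
        F.map (elemHom N n) (ψ m) + F.map (elemHom N n) (ψ m')
      rw [map_add, map_add])
    (fun m n n' => by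
      show F.map (elemHom N (n + n')) (ψ m) =
        F.map (elemHom N n) (ψ m) + F.map (elemHom N n') (ψ m)
      rw [elemHom_add, F.map_add]; rfl)
    (fun m r n => by
      show F.map (elemHom N n) (ψ (MulOpposite.op r • m)) = F.map (elemHom N (r • n)) (ψ m)
      rw [map_smul, evalR_smul_def, MulOpposite.unop_op, ← rmul_comp_elemHom, F.map_comp]
      rfl)

lemma ofHomApp_mk [F.Additive] (ψ : M →ₗ[Rᵐᵒᵖ] F.obj (RObj R))
    (N : FPModLeft R) (m : M) (n : N.obj) :
    ofHomApp ψ N (BalancedTensor.mk R M N.obj m n) = F.map (elemHom N n) (ψ m) := by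
  dsimp only [ofHomApp]
  erw [AddCommGrpCat.ofHom_apply, BalancedTensor.lift_mk]

/-- From an `Rᵐᵒᵖ`-linear map `M → F(R)` to a natural transformation `M ⊗ − ⟶ F`. -/
def ofHom [F.Additive] (ψ : M →ₗ[Rᵐᵒᵖ] F.obj (RObj R)) : tensorFunctor R M ⟶ F where
  app N := ofHomApp ψ N
  naturality {N N'} f := AddCommGrpCat.hom_ext (BalancedTensor.hom_ext R M _ _ (fun m n => by
    show ofHomApp ψ N' ((tensorFunctor R M).map f (BalancedTensor.mk R M N.obj m n)) =
      F.map f (ofHomApp ψ N (BalancedTensor.mk R M N.obj m n))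
    erw [tensorFunctor_map_mk, ofHomApp_mk, ofHomApp_mk, ← elemHom_comp f n, F.map_comp]
    rfl))

lemma ofHom_app [F.Additive] (ψ : M →ₗ[Rᵐᵒᵖ] F.obj (RObj R)) (N : FPModLeft R) :
    (ofHom ψ).app N = ofHomApp ψ N := rfl

lemma toHom_ofHom [F.Additive] (ψ : M →ₗ[Rᵐᵒᵖ] F.obj (RObj R)) : toHom (ofHom ψ) = ψ := by
  apply LinearMap.ext; intro m
  show (ofHom ψ).app (RObj R) (BalancedTensor.mk R M ((RObj R).obj) m (1 : R)) = ψ m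
  erw [ofHom_app, ofHomApp_mk, elemHom_one, F.map_id]
  rfl

lemma ofHom_toHom [F.Additive] (η : tensorFunctor R M ⟶ F) : ofHom (toHom η) = η := by
  ext N : 2
  apply AddCommGrpCat.hom_ext
  apply BalancedTensor.hom_ext R M
  intro m n
  rw [ofHom_app]
  erw [ofHomApp_mk]
  show F.map (elemHom N n) (η.app (RObj R) (BalancedTensor.mk R M _ m (1 : R))) =
    η.app N (BalancedTensor.mk R M N.obj m n)
  have h := ConcreteCategory.congr_hom (η.naturality (elemHom N n))
    (BalancedTensor.mk R M ((RObj R).obj) m (1 : R))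
  have h2 : (tensorFunctor R M).map (elemHom N n)
      (BalancedTensor.mk R M ((RObj R).obj) m (1 : R)) = BalancedTensor.mk R M N.obj m n := by
    erw [tensorFunctor_map_mk]
    congr 1
    exact one_smul R n
  rw [← h2]
  exact h.symm

lemma toHom_injective [F.Additive] : Function.Injective (toHom (M := M) (F := F)) := by
  intro a b h
  rw [← ofHom_toHom (F := F) a, ← ofHom_toHom (F := F) b, h]

lemma toHom_comp [F.Additive] [G.Additive] (η : tensorFunctor R M ⟶ F) (α : F ⟶ G) :
    toHom (η ≫ α) = (evalRMap α).comp (toHom η) := by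
  apply LinearMap.ext; intro m
  rfl


end Correspondence

end PureGen
namespace PureGen

section ColimitInfrastructure

variable {R : Type u} [Ring R]

/-- The underlying functor of every object of `AddFunctorCat R` is additive. -/
instance addFunctorCat_additive (F : AddFunctorCat R) : F.obj.Additive := F.property

/-- The inclusion of the category of additive functors into the functor category. -/
def inclAdd : AddFunctorCat R ⥤ (FPModLeft R ⥤ AddCommGrpCat.{u}) :=
  ObjectProperty.ι _

instance inclAdd_full : (inclAdd (R := R)).Full :=
  ObjectProperty.full_ι _

instance inclAdd_faithful : (inclAdd (R := R)).Faithful :=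
  ObjectProperty.faithful_ι _

instance comp_inclAdd_additive {J : Type u} [SmallCategory J] (K : J ⥤ AddFunctorCat R) (j : J) :
    ((K ⋙ inclAdd).obj j).Additive :=
  (K.obj j).property

variable {J : Type u} [SmallCategory J]

lemma colimit_obj_hom_ext (D : J ⥤ (FPModLeft R ⥤ AddCommGrpCat.{u})) (X : FPModLeft R)
    {A : AddCommGrpCat.{u}} (φ ψ : (colimit D).obj X ⟶ A)
    (h : ∀ j, (colimit.ι D j).app X ≫ φ = (colimit.ι D j).app X ≫ ψ) : φ = ψ := by
  rw [← cancel_epi (colimitObjIsoColimitCompEvaluation D X).inv]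
  apply colimit.hom_ext
  intro j
  rw [← Category.assoc, ← Category.assoc, colimitObjIsoColimitCompEvaluation_ι_inv]
  exact h j

/-- A pointwise colimit of additive functors is additive. -/
lemma colimit_additive (D : J ⥤ (FPModLeft R ⥤ AddCommGrpCat.{u}))
    [∀ j, (D.obj j).Additive] : (colimit D).Additive where
  map_add {X Y f g} := by
    apply colimit_obj_hom_ext
    intro j
    have h1 := (colimit.ι D j).naturality (f + g)
    have h2 := (colimit.ι D j).naturality f
    have h3 := (colimit.ι D j).naturality g
    rw [← h1, Functor.map_add, Preadditive.add_comp, Preadditive.comp_add, h2, h3]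

/-- The cocone over `K` in `AddFunctorCat R` given by the pointwise colimit. -/
@[simps]
noncomputable def addColimCocone (K : J ⥤ AddFunctorCat R) : Cocone K where
  pt := ⟨colimit (K ⋙ inclAdd), colimit_additive _⟩
  ι :=
    { app := fun j =>
        ObjectProperty.homMk
          (show (K ⋙ inclAdd).obj j ⟶ colimit (K ⋙ inclAdd) from colimit.ι (K ⋙ inclAdd) j)
      naturality := fun i j' f => by
        apply ObjectProperty.hom_ext
        exact (colimit.w (K ⋙ inclAdd) f).trans (Category.comp_id _).symm }

/-- The pointwise colimit cocone is a colimit in `AddFunctorCat R`. -/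
noncomputable def addColimCoconeIsColimit (K : J ⥤ AddFunctorCat R) :
    IsColimit (addColimCocone K) := by
  apply isColimitOfReflects (inclAdd (R := R))
  exact (IsColimit.ofIsoColimit (colimit.isColimit (K ⋙ inclAdd))
    (Cocones.ext (Iso.refl _) (fun j => by simp [inclAdd, addColimCocone]; rfl)))

noncomputable instance inclAdd_preservesColimitsOfShape :
    PreservesColimitsOfShape J (inclAdd (R := R)) where
  preservesColimit {K} :=
    preservesColimit_of_preserves_colimit_cocone (addColimCoconeIsColimit K)
      (IsColimit.ofIsoColimit (colimit.isColimit (K ⋙ inclAdd))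
        (Cocones.ext (Iso.refl _) (fun j => by simp [inclAdd, addColimCocone]; rfl)))

/-- Evaluating a colimit cocone of additive functors at an object gives a colimit of
abelian groups. -/
noncomputable def evalIsColimit {K : J ⥤ AddFunctorCat R} {c : Cocone K} (hc : IsColimit c)
    (N : FPModLeft R) :
    IsColimit ((inclAdd ⋙ (evaluation (FPModLeft R) AddCommGrpCat.{u}).obj N).mapCocone c) :=
  isColimitOfPreserves _ hc

end ColimitInfrastructure

end PureGen
namespace PureGen

section ModuleLemmas

variable {R : Type u} [Ring R]
variable {J : Type u} [Preorder J] [IsDirected J (· ≤ ·)] [Nonempty J]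
variable (K : J ⥤ AddFunctorCat R) (c : Cocone K)

/-- Transition map of the direct system evaluated at `R`. -/
noncomputable def trMap {i j : J} (h : i ≤ j) :
    (K.obj i).obj.obj (RObj R) →ₗ[Rᵐᵒᵖ] (K.obj j).obj.obj (RObj R) :=
  evalRMap (show (K.obj i).obj ⟶ (K.obj j).obj from (K.map (homOfLE h)).hom)

/-- Cocone leg evaluated at `R`. -/
noncomputable def ιMap (j : J) :
    (K.obj j).obj.obj (RObj R) →ₗ[Rᵐᵒᵖ] c.pt.obj.obj (RObj R) :=
  evalRMap (show (K.obj j).obj ⟶ c.pt.obj from (c.ι.app j).hom)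

lemma ιMap_tr {i j : J} (h : i ≤ j) (x : (K.obj i).obj.obj (RObj R)) :
    ιMap K c j (trMap K h x) = ιMap K c i x := by
  have h2 : (K.map (homOfLE h) ≫ c.ι.app j) = c.ι.app i := c.w (homOfLE h)
  show NatTrans.app (c.ι.app j).hom (RObj R) (NatTrans.app (K.map (homOfLE h)).hom (RObj R) x) =
    NatTrans.app (c.ι.app i).hom (RObj R) x
  rw [← h2]
  rfl

lemma trMap_trans {i j k : J} (h1 : i ≤ j) (h2 : j ≤ k) (x : (K.obj i).obj.obj (RObj R)) :
    trMap K h2 (trMap K h1 x) = trMap K (h1.trans h2) x := by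
  have h3 : (K.map (homOfLE h1) ≫ K.map (homOfLE h2)) = K.map (homOfLE (h1.trans h2)) := by
    rw [← K.map_comp, homOfLE_comp]
  show NatTrans.app (K.map (homOfLE h2)).hom (RObj R)
      (NatTrans.app (K.map (homOfLE h1)).hom (RObj R) x) =
    NatTrans.app (K.map (homOfLE (h1.trans h2))).hom (RObj R) x
  rw [← h3]
  rfl

/-- Separation: two maps out of a finite module that agree in the colimit agree at some
finite stage. -/
lemma exists_eq_of_finite {M : Type u} [AddCommGroup M] [Module Rᵐᵒᵖ M] [Module.Finite Rᵐᵒᵖ M]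
    (heq : ∀ (i i' : J) (x : (K.obj i).obj.obj (RObj R)) (y : (K.obj i').obj.obj (RObj R)),
      ιMap K c i x = ιMap K c i' y →
        ∃ (k : J) (h : i ≤ k) (h' : i' ≤ k), trMap K h x = trMap K h' y)
    (j : J) (φ φ' : M →ₗ[Rᵐᵒᵖ] (K.obj j).obj.obj (RObj R))
    (H : (ιMap K c j).comp φ = (ιMap K c j).comp φ') :
    ∃ (k : J) (h : j ≤ k), (trMap K h).comp φ = (trMap K h).comp φ' := by
  classical
  obtain ⟨s, hs⟩ := (inferInstance : Module.Finite Rᵐᵒᵖ M).fg_top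
  have hm : ∀ m : {x // x ∈ s}, ∃ (k : J) (h : j ≤ k),
      trMap K h (φ m.1) = trMap K h (φ' m.1) := by
    intro m
    have h1 : ιMap K c j (φ m.1) = ιMap K c j (φ' m.1) := DFunLike.congr_fun H m.1
    obtain ⟨k, h, h', he⟩ := heq j j (φ m.1) (φ' m.1) h1
    exact ⟨k, h, he⟩
  choose kf hkf heqf using hm
  obtain ⟨k₀, hk₀⟩ := Finset.exists_le (insert j (s.attach.image kf))
  have hjk₀ : j ≤ k₀ := hk₀ j (Finset.mem_insert_self _ _)
  refine ⟨k₀, hjk₀, ?_⟩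
  apply LinearMap.ext_on hs
  intro m hms
  have hmk₀ : kf ⟨m, hms⟩ ≤ k₀ :=
    hk₀ _ (Finset.mem_insert_of_mem (Finset.mem_image_of_mem _ (Finset.mem_attach _ _)))
  show trMap K hjk₀ (φ m) = trMap K hjk₀ (φ' m)
  have e1 : trMap K hjk₀ (φ m) = trMap K hmk₀ (trMap K (hkf ⟨m, hms⟩) (φ m)) := by
    rw [trMap_trans]
  have e2 : trMap K hjk₀ (φ' m) = trMap K hmk₀ (trMap K (hkf ⟨m, hms⟩) (φ' m)) := by
    rw [trMap_trans]
  rw [e1, e2, heqf ⟨m, hms⟩]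

/-- Lifting: a map out of a finitely presented module into the colimit factors through a
finite stage. -/
lemma exists_lift_of_fp {M : Type u} [AddCommGroup M] [Module Rᵐᵒᵖ M]
    [Module.FinitePresentation Rᵐᵒᵖ M]
    (hsurj : ∀ x : c.pt.obj.obj (RObj R), ∃ (j : J) (y : (K.obj j).obj.obj (RObj R)),
      ιMap K c j y = x)
    (heq : ∀ (i i' : J) (x : (K.obj i).obj.obj (RObj R)) (y : (K.obj i').obj.obj (RObj R)),
      ιMap K c i x = ιMap K c i' y →
        ∃ (k : J) (h : i ≤ k) (h' : i' ≤ k), trMap K h x = trMap K h' y)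
    (ψ : M →ₗ[Rᵐᵒᵖ] c.pt.obj.obj (RObj R)) :
    ∃ (j : J) (ψ' : M →ₗ[Rᵐᵒᵖ] (K.obj j).obj.obj (RObj R)), (ιMap K c j).comp ψ' = ψ := by
  classical
  obtain ⟨s, hs, hker⟩ := (inferInstance : Module.FinitePresentation Rᵐᵒᵖ M).out
  set lc := Finsupp.linearCombination Rᵐᵒᵖ ((↑) : {x // x ∈ s} → M) with hlc
  have hlc_surj : Function.Surjective lc := by
    rw [← LinearMap.range_eq_top, Finsupp.range_linearCombination]
    simpa using hs
  choose j₀f yf hyf using fun (m : {x // x ∈ s}) => hsurj (ψ m.1)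
  obtain ⟨j₀, hj₀⟩ := Finset.exists_le (s.attach.image j₀f)
  have hj₀' : ∀ m : {x // x ∈ s}, j₀f m ≤ j₀ := fun m =>
    hj₀ _ (Finset.mem_image_of_mem _ (Finset.mem_attach _ _))
  set a : {x // x ∈ s} → (K.obj j₀).obj.obj (RObj R) :=
    fun m => trMap K (hj₀' m) (yf m) with ha
  set g₀ := Finsupp.linearCombination Rᵐᵒᵖ a with hg₀def
  have hg₀ : (ιMap K c j₀).comp g₀ = ψ.comp lc := by
    apply Finsupp.lhom_ext
    intro m b
    show ιMap K c j₀ (g₀ (Finsupp.single m b)) = ψ (lc (Finsupp.single m b))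
    rw [hg₀def, hlc, Finsupp.linearCombination_single, Finsupp.linearCombination_single,
      map_smul, map_smul, ha]
    dsimp only
    rw [ιMap_tr, hyf]
  obtain ⟨t, ht⟩ := hker
  have hzero : ∀ v : {x // x ∈ t}, ∃ (k : J) (h : j₀ ≤ k), trMap K h (g₀ v.1) = 0 := by
    intro v
    have hv : v.1 ∈ LinearMap.ker lc := by
      rw [← ht]
      exact Submodule.subset_span v.2
    have h1 : ιMap K c j₀ (g₀ v.1) = ιMap K c j₀ 0 := by
      have := DFunLike.congr_fun hg₀ v.1
      rw [map_zero]
      show ((ιMap K c j₀).comp g₀) v.1 = 0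
      rw [this]
      show ψ (lc v.1) = 0
      rw [LinearMap.mem_ker.mp hv, map_zero]
    obtain ⟨k, h, h', he⟩ := heq j₀ j₀ (g₀ v.1) 0 h1
    refine ⟨k, h, ?_⟩
    rw [he, map_zero]
  choose kf hkf hkf0 using hzero
  obtain ⟨k₁, hk₁⟩ := Finset.exists_le (insert j₀ (t.attach.image kf))
  have hj₀k₁ : j₀ ≤ k₁ := hk₁ j₀ (Finset.mem_insert_self _ _)
  set g₁ := (trMap K hj₀k₁).comp g₀ with hg₁def
  have hle : LinearMap.ker lc ≤ LinearMap.ker g₁ := by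
    rw [← ht, Submodule.span_le]
    intro v hv
    have hvk : kf ⟨v, hv⟩ ≤ k₁ :=
      hk₁ _ (Finset.mem_insert_of_mem (Finset.mem_image_of_mem _ (Finset.mem_attach _ _)))
    show g₁ v = 0
    rw [hg₁def]
    show trMap K hj₀k₁ (g₀ v) = 0
    have e1 : trMap K hj₀k₁ (g₀ v) = trMap K hvk (trMap K (hkf ⟨v, hv⟩) (g₀ v)) := by
      rw [trMap_trans]
    rw [e1, hkf0 ⟨v, hv⟩, map_zero]
  set e := LinearMap.quotKerEquivOfSurjective lc hlc_surj with hedef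
  set ψ' := (Submodule.liftQ (LinearMap.ker lc) g₁ hle).comp
    (e.symm : M →ₗ[Rᵐᵒᵖ] _) with hψ'def
  have hψ'lc : ∀ x, ψ' (lc x) = g₁ x := by
    intro x
    have hx : e.symm (lc x) = Submodule.Quotient.mk x := by
      apply e.injective
      rw [LinearEquiv.apply_symm_apply]
      rw [hedef]
      simp [LinearMap.quotKerEquivOfSurjective]
    rw [hψ'def]
    show Submodule.liftQ (LinearMap.ker lc) g₁ hle (e.symm (lc x)) = g₁ x
    rw [hx, Submodule.liftQ_apply]
  refine ⟨k₁, ψ', ?_⟩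
  apply LinearMap.ext
  intro m
  obtain ⟨x, rfl⟩ := hlc_surj m
  show ιMap K c k₁ (ψ' (lc x)) = ψ (lc x)
  rw [hψ'lc, hg₁def]
  show ιMap K c k₁ (trMap K hj₀k₁ (g₀ x)) = ψ (lc x)
  rw [ιMap_tr]
  exact DFunLike.congr_fun hg₀ x

end ModuleLemmas

end PureGen
open PureGen in
/-- Let `R` be a ring and `M` a finitely presented right `R`-module (= left
`Rᵐᵒᵖ`-module).  Then the functor `M ⊗_R −`, regarded as an object of the category of
additive functors from finitely presented left `R`-modules to abelian groups, is a
finitely presentable object: its hom-functor preserves directed colimits. -/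
theorem tensorFunctor_finitelyPresentable
    (R : Type u) [Ring R] (M : Type u) [AddCommGroup M] [Module Rᵐᵒᵖ M]
    (hM : Module.FinitePresentation Rᵐᵒᵖ M) :
    IsFinitelyPresentableObj.{u} (tensorFunctorObj R M : AddFunctorCat R) := by
  haveI := hM
  intro J _pre _dir _ne
  constructor
  intro K
  constructor
  intro c hc
  -- pointwise colimit at `R`, in types
  have hcR := evalIsColimit hc (RObj R)
  have hcT : IsColimit ((forget AddCommGrpCat.{u}).mapCocone
      ((inclAdd ⋙ (evaluation (FPModLeft R) AddCommGrpCat.{u}).obj (RObj R)).mapCocone c)) :=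
    isColimitOfPreserves (forget AddCommGrpCat.{u}) hcR
  have hsurj : ∀ x : c.pt.obj.obj (RObj R), ∃ (j : J) (y : (K.obj j).obj.obj (RObj R)),
      ιMap K c j y = x := by
    intro x
    obtain ⟨j, y, hy⟩ := Types.jointly_surjective _ hcT x
    exact ⟨j, y, hy⟩
  have heq : ∀ (i i' : J) (x : (K.obj i).obj.obj (RObj R)) (y : (K.obj i').obj.obj (RObj R)),
      ιMap K c i x = ιMap K c i' y →
        ∃ (k : J) (h : i ≤ k) (h' : i' ≤ k), trMap K h x = trMap K h' y := by
    intro i i' x y hxy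
    obtain ⟨k, f, g, hfg⟩ := (Types.FilteredColimit.isColimit_eq_iff _ hcT
      (xi := x) (xj := y)).mp hxy
    exact ⟨k, leOfHom f, leOfHom g, hfg⟩
  constructor
  apply Types.FilteredColimit.isColimitOf
  · -- joint surjectivity
    intro x
    have hψ := exists_lift_of_fp K c hsurj heq
      (toHom x.hom)
    obtain ⟨j, ψ', hψ'⟩ := hψ
    refine ⟨j, ObjectProperty.homMk (ofHom ψ'), ?_⟩
    show x = ObjectProperty.homMk (ofHom ψ') ≫ c.ι.app j
    apply ObjectProperty.hom_ext
    apply toHom_injective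
    have hcomp : toHom ((ObjectProperty.homMk (ofHom ψ') :
        (tensorFunctorObj R M : AddFunctorCat R) ⟶ K.obj j) ≫ c.ι.app j).hom =
        (ιMap K c j).comp (toHom (ofHom ψ')) := by
      apply LinearMap.ext; intro m; rfl
    rw [hcomp, toHom_ofHom, hψ']
  · -- eventual equality
    intro i i' θ θ' hθ
    obtain ⟨k₀, h1, h2⟩ := exists_ge_ge i i'
    set θ₀ : tensorFunctor R M ⟶ (K.obj k₀).obj :=
      (θ ≫ K.map (homOfLE h1)).hom with hθ₀
    set θ₀' : tensorFunctor R M ⟶ (K.obj k₀).obj :=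
      (θ' ≫ K.map (homOfLE h2)).hom with hθ₀'
    have hcomb : (show tensorFunctor R M ⟶ c.pt.obj from θ₀ ≫ (c.ι.app k₀).hom) =
        (show tensorFunctor R M ⟶ c.pt.obj from θ₀' ≫ (c.ι.app k₀).hom) := by
      show (((θ ≫ K.map (homOfLE h1)) ≫ c.ι.app k₀ :
          (tensorFunctorObj R M : AddFunctorCat R) ⟶ c.pt)).hom =
        ((θ' ≫ K.map (homOfLE h2)) ≫ c.ι.app k₀).hom
      rw [Category.assoc, Category.assoc, c.w, c.w]
      exact congrArg (fun f : (tensorFunctorObj R M : AddFunctorCat R) ⟶ c.pt => f.hom) hθ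
    have H : (ιMap K c k₀).comp (toHom θ₀) = (ιMap K c k₀).comp (toHom θ₀') := by
      have h3 : (ιMap K c k₀).comp (toHom θ₀) =
          toHom (show tensorFunctor R M ⟶ c.pt.obj from θ₀ ≫ (c.ι.app k₀).hom) := by
        apply LinearMap.ext; intro m; rfl
      have h4 : (ιMap K c k₀).comp (toHom θ₀') =
          toHom (show tensorFunctor R M ⟶ c.pt.obj from θ₀' ≫ (c.ι.app k₀).hom) := by
        apply LinearMap.ext; intro m; rfl
      rw [h3, h4, hcomb]
    obtain ⟨k, h, hfin⟩ := exists_eq_of_finite K c heq k₀ (toHom θ₀) (toHom θ₀') H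
    have hfin' : (show tensorFunctor R M ⟶ (K.obj k).obj from θ₀ ≫ (K.map (homOfLE h)).hom) =
        (show tensorFunctor R M ⟶ (K.obj k).obj from θ₀' ≫ (K.map (homOfLE h)).hom) := by
      apply toHom_injective
      have h5 : toHom (show tensorFunctor R M ⟶ (K.obj k).obj from θ₀ ≫ (K.map (homOfLE h)).hom) =
          (trMap K h).comp (toHom θ₀) := by
        apply LinearMap.ext; intro m; rfl
      have h6 : toHom (show tensorFunctor R M ⟶ (K.obj k).obj from θ₀' ≫ (K.map (homOfLE h)).hom) =
          (trMap K h).comp (toHom θ₀') := by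
        apply LinearMap.ext; intro m; rfl
      rw [h5, h6, hfin]
    refine ⟨k, homOfLE (h1.trans h), homOfLE (h2.trans h), ?_⟩
    show θ ≫ K.map (homOfLE (h1.trans h)) = θ' ≫ K.map (homOfLE (h2.trans h))
    have e1 : K.map (homOfLE (h1.trans h)) = K.map (homOfLE h1) ≫ K.map (homOfLE h) := by
      rw [← K.map_comp, homOfLE_comp]
    have e2 : K.map (homOfLE (h2.trans h)) = K.map (homOfLE h2) ≫ K.map (homOfLE h) := by
      rw [← K.map_comp, homOfLE_comp]
    rw [e1, e2, ← Category.assoc, ← Category.assoc]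
    apply ObjectProperty.hom_ext
    exact hfin'
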